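/- arXiv:1611.07597 — 6 statements merged into one kernel-verified Lean document; each statement's English description precedes it below -/
import Mathlib

section
/- Let n ≥ 2, 2 ≤ k ≤ n, and let λ = (λ_1, …, λ_n) ∈ Γ_+ (i.e. λ_i > 0 for all i). Then σ_1(λ)/(k(k−1)) − kσ_k(λ)/((k−1)σ_{k−1}(λ)) + (k+1)σ_{k+1}(λ)/(kσ_k(λ)) ≥ 0, and equality holds if and only if λ_1 = λ_2 = ⋯ = λ_n. -/
/-!
Multiplying the expression by `k (k - 1) σ_{k-1} σ_k > 0` turns it into
`Q = σ₁ σ_{k-1} σ_k - k² σ_k² + (k² - 1) σ_{k-1} σ_{k+1}`. Let `u_i = σ_{k-1}(λ | i)` and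
`v_i = σ_{k-2}(λ | i)` be computed with `λ_i` removed. The identities
`∑ λ_i σ_j(λ | i) = (j + 1) σ_{j+1}` and `∑ λ_i² σ_j(λ | i) = σ₁ σ_{j+1} - (j + 2) σ_{j+2}` give
`Q = (∑ λ_i u_i)(∑ λ_i² v_i) - (∑ λ_i v_i)(∑ λ_i² u_i)`, which the Binet–Cauchy identity turns into
`2Q = ∑_{i,j} λ_i λ_j (λ_j - λ_i)(u_i v_j - u_j v_i)`. Removing both `λ_i` and `λ_j` shows
`u_i v_j - u_j v_i = (λ_j - λ_i)(σ_{k-2}² - σ_{k-3} σ_{k-1})(λ | i j)`, and the last factor is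
positive by Newton's inequality. So every term of `2Q` is nonnegative and vanishes only if
`λ_i = λ_j`.
-/

open Finset

/-- The `k`-th elementary symmetric polynomial of `lam : Fin n → ℝ`;
by convention `esymm 0 lam = 1` and `esymm k lam = 0` for `k > n`. -/
noncomputable def esymm {n : ℕ} (k : ℕ) (lam : Fin n → ℝ) : ℝ :=
  ∑ s ∈ Finset.univ.powersetCard k, ∏ i ∈ s, lam i

section

variable {ι R : Type*}

section CommSemiring

variable [CommSemiring R] (lam : ι → R)

noncomputable def esymmOn (A : Finset ι) (j : ℕ) : R :=
  ∑ s ∈ A.powersetCard j, ∏ i ∈ s, lam i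

theorem esymmOn_zero (A : Finset ι) : esymmOn lam A 0 = 1 := by
  simp [esymmOn]

theorem esymmOn_one (A : Finset ι) : esymmOn lam A 1 = ∑ i ∈ A, lam i := by
  simp [esymmOn, powersetCard_one]

theorem esymmOn_of_card_lt {A : Finset ι} {j : ℕ} (h : #A < j) : esymmOn lam A j = 0 := by
  simp [esymmOn, powersetCard_eq_empty.2 h]

variable [DecidableEq ι]

theorem esymmOn_insert {x : ι} {A : Finset ι} (hx : x ∉ A) (j : ℕ) :
    esymmOn lam (insert x A) (j + 1) = esymmOn lam A (j + 1) + lam x * esymmOn lam A j := by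
  have hxs : ∀ s ∈ A.powersetCard j, x ∉ s := fun s hs h => hx ((mem_powersetCard.1 hs).1 h)
  rw [esymmOn, powersetCard_succ_insert hx, sum_union, sum_image, esymmOn, esymmOn, mul_sum]
  · exact congrArg _ (sum_congr rfl fun s hs => prod_insert (hxs s hs))
  · intro s hs t ht hst
    rw [← erase_insert (hxs s hs), ← erase_insert (hxs t ht)]
    exact congrArg (erase · x) hst
  · refine disjoint_right.2 fun t ht ht' => ?_
    obtain ⟨s, -, rfl⟩ := mem_image.1 ht
    exact hx ((mem_powersetCard.1 ht').1 (mem_insert_self x s))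

theorem esymmOn_succ_of_mem {x : ι} {A : Finset ι} (hx : x ∈ A) (j : ℕ) :
    esymmOn lam A (j + 1) =
      esymmOn lam (A.erase x) (j + 1) + lam x * esymmOn lam (A.erase x) j := by
  conv_lhs => rw [← insert_erase hx]
  exact esymmOn_insert lam (notMem_erase x A) j

theorem sum_mul_esymmOn_erase (A : Finset ι) (j : ℕ) :
    ∑ i ∈ A, lam i * esymmOn lam (A.erase i) j = (j + 1) * esymmOn lam A (j + 1) := by
  induction A using Finset.induction_on generalizing j with
  | empty => simp [esymmOn_of_card_lt lam (card_empty.trans_lt j.succ_pos)]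
  | insert x A hx ih =>
    rcases j with _ | j
    · simp [esymmOn_zero, esymmOn_one]
    have herase : ∀ i ∈ A, (insert x A).erase i = insert x (A.erase i) := fun i hi =>
      erase_insert_of_ne (ne_of_mem_of_not_mem hi hx).symm
    rw [sum_insert hx, erase_insert hx, esymmOn_insert lam hx,
      sum_congr rfl fun i hi => by
        rw [herase i hi, esymmOn_insert lam fun h => hx (mem_of_mem_erase h)]]
    simp_rw [mul_add, sum_add_distrib, mul_left_comm (lam _) (lam x), ← mul_sum, ih]
    push_cast
    ring

theorem sum_sq_mul_esymmOn_erase (A : Finset ι) (j : ℕ) :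
    (j + 2) * esymmOn lam A (j + 2) + ∑ i ∈ A, lam i ^ 2 * esymmOn lam (A.erase i) j =
      esymmOn lam A 1 * esymmOn lam A (j + 1) := by
  rw [esymmOn_one, sum_mul, show ((j : R) + 2) = ((j + 1 : ℕ) : R) + 1 by push_cast; ring,
    ← sum_mul_esymmOn_erase, ← sum_add_distrib]
  refine sum_congr rfl fun i hi => ?_
  rw [esymmOn_succ_of_mem lam hi j]
  ring

end CommSemiring

section CommRing

variable [CommRing R]

theorem binet_cauchy (s : Finset ι) (a b u v : ι → R) :
    2 * ((∑ i ∈ s, a i * u i) * (∑ i ∈ s, b i * v i) -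
        (∑ i ∈ s, a i * v i) * (∑ i ∈ s, b i * u i)) =
      ∑ i ∈ s, ∑ j ∈ s, (a i * b j - a j * b i) * (u i * v j - u j * v i) := by
  have hsplit : ∀ i j, (a i * b j - a j * b i) * (u i * v j - u j * v i) =
      (a i * u i * (b j * v j) - a i * v i * (b j * u j)) +
        (a j * u j * (b i * v i) - a j * v j * (b i * u i)) := fun i j => by ring
  simp_rw [hsplit, sum_add_distrib]
  rw [sum_comm (f := fun i j => a j * u j * (b i * v i) - a j * v j * (b i * u i))]
  simp only [sum_sub_distrib, sum_mul_sum]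
  ring

-- `k (k - 1) σ_{k-1} σ_k` times the expression of the theorem, for `k = m + 2`.
noncomputable def esymmDefect (lam : ι → R) (A : Finset ι) (m : ℕ) : R :=
  esymmOn lam A 1 * esymmOn lam A (m + 1) * esymmOn lam A (m + 2)
    - ((m : R) + 2) ^ 2 * esymmOn lam A (m + 2) ^ 2
    + (((m : R) + 2) ^ 2 - 1) * esymmOn lam A (m + 1) * esymmOn lam A (m + 3)

theorem two_mul_esymmDefect_eq_sum [DecidableEq ι] (lam : ι → R) (A : Finset ι) (m : ℕ) :
    2 * esymmDefect lam A m =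
      ∑ i ∈ A, ∑ j ∈ A, (lam i * lam j ^ 2 - lam j * lam i ^ 2) *
        (esymmOn lam (A.erase i) (m + 1) * esymmOn lam (A.erase j) m -
          esymmOn lam (A.erase j) (m + 1) * esymmOn lam (A.erase i) m) := by
  rw [← binet_cauchy]
  have h₁ := sum_mul_esymmOn_erase lam A m
  have h₂ := sum_mul_esymmOn_erase lam A (m + 1)
  have h₃ := sum_sq_mul_esymmOn_erase lam A m
  have h₄ := sum_sq_mul_esymmOn_erase lam A (m + 1)
  push_cast at h₂ h₄
  rw [esymmDefect, ← sub_eq_iff_eq_add'.2 h₃.symm, ← sub_eq_iff_eq_add'.2 h₄.symm, h₁, h₂]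
  ring

end CommRing

section StrictOrderedRing

variable [CommRing R] [LinearOrder R] [IsStrictOrderedRing R]

theorem mul_le_mul_of_mul_le_sq {a b c d : R} (hb : 0 < b) (hc : 0 < c) (hd : 0 ≤ d)
    (habc : a * c ≤ b ^ 2) (hbcd : b * d ≤ c ^ 2) : a * d ≤ b * c := by
  refine le_of_mul_le_mul_right ?_ (mul_pos hb hc)
  calc a * d * (b * c) = (a * c) * (b * d) := by ring
    _ ≤ b ^ 2 * c ^ 2 := mul_le_mul habc hbcd (mul_nonneg hb.le hd) (sq_nonneg b)
    _ = b * c * (b * c) := by ring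

theorem newton_insert_step {a₀ a₁ a₂ a₃ x : R} (hx : 0 < x) (h₀₂ : a₀ * a₂ < a₁ ^ 2)
    (h₁₃ : a₁ * a₃ ≤ a₂ ^ 2) (h₀₃ : a₀ * a₃ ≤ a₁ * a₂) :
    (a₁ + x * a₀) * (a₃ + x * a₂) < (a₂ + x * a₁) ^ 2 := by
  nlinarith [mul_le_mul_of_nonneg_left h₀₃ hx.le, mul_lt_mul_of_pos_left h₀₂ (mul_pos hx hx)]

variable {lam : ι → R} (hpos : ∀ i, 0 < lam i)
include hpos

theorem esymmOn_nonneg (A : Finset ι) (j : ℕ) : 0 ≤ esymmOn lam A j :=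
  sum_nonneg fun _ _ => prod_nonneg fun i _ => (hpos i).le

theorem esymmOn_pos {A : Finset ι} {j : ℕ} (h : j ≤ #A) : 0 < esymmOn lam A j := by
  obtain ⟨t, hts, htc⟩ := exists_subset_card_eq h
  exact sum_pos (fun s _ => prod_pos fun i _ => hpos i) ⟨t, mem_powersetCard.2 ⟨hts, htc⟩⟩

variable [DecidableEq ι]

theorem esymmOn_mul_esymmOn_lt_sq (A : Finset ι) {j : ℕ} (hj : j + 1 ≤ #A) :
    esymmOn lam A j * esymmOn lam A (j + 2) < esymmOn lam A (j + 1) ^ 2 := by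
  induction A using Finset.induction_on generalizing j with
  | empty => simp at hj
  | insert x A hx ih =>
    have hA := esymmOn_nonneg hpos A
    have hle : ∀ j, esymmOn lam A j * esymmOn lam A (j + 2) ≤ esymmOn lam A (j + 1) ^ 2 := by
      intro j
      by_cases hj : j + 1 ≤ #A
      · exact (ih hj).le
      · rw [esymmOn_of_card_lt lam (show #A < j + 2 by omega), mul_zero]
        positivity
    rw [card_insert_of_notMem hx] at hj
    rcases j with _ | j
    · have h₀ := hle 0
      rw [esymmOn_zero, one_mul] at h₀
      show esymmOn lam _ 0 * esymmOn lam _ (1 + 1) < esymmOn lam _ (0 + 1) ^ 2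
      rw [esymmOn_insert lam hx, esymmOn_insert lam hx, esymmOn_zero, esymmOn_zero, one_mul]
      nlinarith [hpos x, hA 1]
    have hcross : esymmOn lam A j * esymmOn lam A (j + 3) ≤
        esymmOn lam A (j + 1) * esymmOn lam A (j + 2) := by
      by_cases hj : j + 2 ≤ #A
      · exact mul_le_mul_of_mul_le_sq (esymmOn_pos hpos (by omega)) (esymmOn_pos hpos hj)
          (hA _) (hle j) (hle (j + 1))
      · rw [esymmOn_of_card_lt lam (show #A < j + 3 by omega), mul_zero]
        exact mul_nonneg (hA _) (hA _)
    rw [esymmOn_insert lam hx, esymmOn_insert lam hx, esymmOn_insert lam hx]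
    exact newton_insert_step (hpos x) (ih (by omega)) (hle (j + 1)) hcross

theorem exists_pos_esymmOn_insert_det_eq {T : Finset ι} {x y : ι} (hx : x ∉ T) (hy : y ∉ T)
    {m : ℕ} (hm : m ≤ #T) :
    ∃ G, 0 < G ∧
      esymmOn lam (insert y T) (m + 1) * esymmOn lam (insert x T) m -
          esymmOn lam (insert x T) (m + 1) * esymmOn lam (insert y T) m = (lam y - lam x) * G := by
  rcases m with _ | m
  · refine ⟨1, one_pos, ?_⟩
    rw [esymmOn_insert lam hx, esymmOn_insert lam hy]
    simp only [esymmOn_zero]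
    ring
  · refine ⟨esymmOn lam T (m + 1) ^ 2 - esymmOn lam T m * esymmOn lam T (m + 2),
      sub_pos.2 (esymmOn_mul_esymmOn_lt_sq hpos T hm), ?_⟩
    simp only [esymmOn_insert lam hx, esymmOn_insert lam hy]
    ring

theorem exists_pos_esymmOn_erase_det_eq {A : Finset ι} {i j : ι} (hi : i ∈ A) (hj : j ∈ A)
    {m : ℕ} (hm : m + 2 ≤ #A) :
    ∃ G, 0 < G ∧
      esymmOn lam (A.erase i) (m + 1) * esymmOn lam (A.erase j) m -
          esymmOn lam (A.erase j) (m + 1) * esymmOn lam (A.erase i) m = (lam j - lam i) * G := by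
  obtain rfl | hij := eq_or_ne i j
  · exact ⟨1, one_pos, by ring⟩
  have hjAi : j ∈ A.erase i := mem_erase.2 ⟨hij.symm, hj⟩
  have hiAj : i ∈ A.erase j := mem_erase.2 ⟨hij, hi⟩
  have hcomm : (A.erase j).erase i = (A.erase i).erase j := erase_right_comm
  rw [← insert_erase hjAi, ← insert_erase hiAj, hcomm]
  refine exists_pos_esymmOn_insert_det_eq hpos (hcomm ▸ notMem_erase i _) (notMem_erase j _) ?_
  rw [card_erase_of_mem hjAi, card_erase_of_mem hi]
  omega

theorem esymmDefect_nonneg_and_eq_zero_iff {A : Finset ι} {m : ℕ} (hm : m + 2 ≤ #A) :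
    0 ≤ esymmDefect lam A m ∧ (esymmDefect lam A m = 0 ↔ ∀ i ∈ A, ∀ j ∈ A, lam i = lam j) := by
  obtain ⟨G, hG, hsum⟩ : ∃ G : ι → ι → R, (∀ i ∈ A, ∀ j ∈ A, 0 < G i j) ∧
      2 * esymmDefect lam A m = ∑ i ∈ A, ∑ j ∈ A, lam i * lam j * (lam j - lam i) ^ 2 * G i j := by
    choose! G hG hdet using fun i (hi : i ∈ A) j (hj : j ∈ A) =>
      exists_pos_esymmOn_erase_det_eq hpos hi hj hm
    refine ⟨G, hG, ?_⟩
    rw [two_mul_esymmDefect_eq_sum]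
    refine sum_congr rfl fun i hi => sum_congr rfl fun j hj => ?_
    rw [hdet i hi j hj]
    ring
  have hterm : ∀ i ∈ A, ∀ j ∈ A, 0 ≤ lam i * lam j * (lam j - lam i) ^ 2 * G i j := by
    intro i hi j hj
    have := hpos i
    have := hpos j
    have := hG i hi j hj
    positivity
  refine ⟨by linarith [sum_nonneg fun i hi => sum_nonneg (hterm i hi)], ?_⟩
  rw [← mul_right_inj' (two_ne_zero' R), mul_zero, hsum,
    sum_eq_zero_iff_of_nonneg fun i hi => sum_nonneg (hterm i hi)]
  refine forall₂_congr fun i hi => ?_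
  rw [sum_eq_zero_iff_of_nonneg (hterm i hi)]
  refine forall₂_congr fun j hj => ?_
  simp [(hpos i).ne', (hpos j).ne', (hG i hi j hj).ne', sub_eq_zero, eq_comm (a := lam i)]

end StrictOrderedRing

end

theorem esymm_eq_esymmOn {n : ℕ} (k : ℕ) (lam : Fin n → ℝ) :
    esymm k lam = esymmOn lam univ k :=
  rfl

theorem stmt_0_general (n k : ℕ) (hk : 2 ≤ k) (hkn : k ≤ n)
    (lam : Fin n → ℝ) (hpos : ∀ i, 0 < lam i) :
    0 ≤ esymm 1 lam / ((k : ℝ) * ((k : ℝ) - 1))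
        - (k : ℝ) * esymm k lam / (((k : ℝ) - 1) * esymm (k - 1) lam)
        + ((k : ℝ) + 1) * esymm (k + 1) lam / ((k : ℝ) * esymm k lam)
    ∧ (esymm 1 lam / ((k : ℝ) * ((k : ℝ) - 1))
        - (k : ℝ) * esymm k lam / (((k : ℝ) - 1) * esymm (k - 1) lam)
        + ((k : ℝ) + 1) * esymm (k + 1) lam / ((k : ℝ) * esymm k lam) = 0
      ↔ ∀ i j, lam i = lam j) := by
  obtain ⟨m, rfl⟩ := Nat.exists_eq_add_of_le' hk
  have hcard : m + 2 ≤ #(univ : Finset (Fin n)) := by simpa using hkn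
  have hσ₁ : 0 < esymmOn lam univ (m + 1) := esymmOn_pos hpos (by omega)
  have hσ₂ : 0 < esymmOn lam univ (m + 2) := esymmOn_pos hpos hcard
  set D : ℝ := (m + 1) * esymmOn lam univ (m + 1) * ((m + 2) * esymmOn lam univ (m + 2)) with hD
  have hDpos : 0 < D := by positivity
  obtain ⟨hnonneg, hzero⟩ := esymmDefect_nonneg_and_eq_zero_iff hpos hcard
  have hquot : 0 ≤ esymmDefect lam univ m / D ∧
      (esymmDefect lam univ m / D = 0 ↔ ∀ i j, lam i = lam j) := by
    refine ⟨div_nonneg hnonneg hDpos.le, ?_⟩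
    rw [div_eq_zero_iff, or_iff_left hDpos.ne', hzero]
    simp
  convert hquot using 3 <;>
  · simp only [hD, esymm_eq_esymmOn, esymmDefect]
    push_cast
    rw [show (m : ℝ) + 2 - 1 = m + 1 by ring]
    field_simp
    ring

theorem stmt_0 (n k : ℕ) (hn : 2 ≤ n) (hk : 2 ≤ k) (hkn : k ≤ n)
    (lam : Fin n → ℝ) (hpos : ∀ i, 0 < lam i) :
    0 ≤ esymm 1 lam / ((k : ℝ) * ((k : ℝ) - 1))
        - (k : ℝ) * esymm k lam / (((k : ℝ) - 1) * esymm (k - 1) lam)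
        + ((k : ℝ) + 1) * esymm (k + 1) lam / ((k : ℝ) * esymm k lam)
    ∧ (esymm 1 lam / ((k : ℝ) * ((k : ℝ) - 1))
        - (k : ℝ) * esymm k lam / (((k : ℝ) - 1) * esymm (k - 1) lam)
        + ((k : ℝ) + 1) * esymm (k + 1) lam / ((k : ℝ) * esymm k lam) = 0
      ↔ ∀ i j, lam i = lam j) :=
  stmt_0_general n k hk hkn lam hpos
end

section
/- Let n ≥ 2, 2 ≤ k ≤ n, and let λ = (λ_1, …, λ_n) ∈ Γ_+ (i.e. λ_i > 0 for all i). Then (k−1)σ_1(λ) − 2kσ_2(λ)/σ_1(λ) + (k+1)σ_{k+1}(λ)/σ_k(λ) ≥ 0, and equality holds if and only if λ_1 = λ_2 = ⋯ = λ_n. -/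
open Finset

namespace Stmt1Aux

variable {n : ℕ}

/-- Elementary symmetric polynomial restricted to a subset `s`. -/
noncomputable def Es (lam : Fin n → ℝ) (s : Finset (Fin n)) (r : ℕ) : ℝ :=
  ∑ t ∈ s.powersetCard r, ∏ i ∈ t, lam i

lemma Es_zero (lam : Fin n → ℝ) (s : Finset (Fin n)) : Es lam s 0 = 1 := by
  simp [Es]

lemma Es_pos (lam : Fin n → ℝ) (hpos : ∀ i, 0 < lam i) (s : Finset (Fin n)) {r : ℕ}
    (hr : r ≤ s.card) : 0 < Es lam s r :=
  Finset.sum_pos (fun t _ => Finset.prod_pos fun j _ => hpos j)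
    (Finset.powersetCard_nonempty.2 hr)

lemma Es_erase (lam : Fin n → ℝ) (s : Finset (Fin n)) {i : Fin n} (hi : i ∈ s) (r : ℕ) :
    Es lam s (r + 1) = Es lam (s.erase i) (r + 1) + lam i * Es lam (s.erase i) r := by
  have hni : i ∉ s.erase i := notMem_erase i s
  conv_lhs => rw [Es, ← Finset.insert_erase hi, Finset.powersetCard_succ_insert hni]
  rw [Finset.sum_union ?disj]
  case disj =>
    rw [Finset.disjoint_left]
    intro t ht htimg
    obtain ⟨u, _, rfl⟩ := Finset.mem_image.1 htimg
    exact hni ((Finset.mem_powersetCard.1 ht).1 (mem_insert_self i u))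
  congr 1
  rw [Finset.sum_image ?inj, Es, Finset.mul_sum]
  case inj =>
    intro t ht u hu h
    have hti : i ∉ t := fun hh => hni ((Finset.mem_powersetCard.1 ht).1 hh)
    have hui : i ∉ u := fun hh => hni ((Finset.mem_powersetCard.1 hu).1 hh)
    rw [← Finset.erase_insert hti, h, Finset.erase_insert hui]
  apply Finset.sum_congr rfl
  intro t ht
  exact Finset.prod_insert (fun hh => hni ((Finset.mem_powersetCard.1 ht).1 hh))

lemma sum_insert_eq (lam : Fin n → ℝ) (s : Finset (Fin n)) (r : ℕ) :
    ∑ i ∈ s, lam i * Es lam (s.erase i) r = ((r : ℝ) + 1) * Es lam s (r + 1) := by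
  have lhs_eq : ∑ i ∈ s, lam i * Es lam (s.erase i) r
      = ∑ p ∈ s.sigma (fun i => (s.erase i).powersetCard r), ∏ j ∈ insert p.1 p.2, lam j := by
    rw [Finset.sum_sigma]
    apply Finset.sum_congr rfl
    intro i _
    rw [Es, Finset.mul_sum]
    apply Finset.sum_congr rfl
    intro t ht
    have hit : i ∉ t := fun h => (Finset.notMem_erase i s)
      ((Finset.mem_powersetCard.1 ht).1 h)
    rw [Finset.prod_insert hit]
  have rhs_eq : ((r : ℝ) + 1) * Es lam s (r + 1)
      = ∑ p ∈ (s.powersetCard (r + 1)).sigma (fun u => u), ∏ j ∈ p.1, lam j := by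
    rw [Finset.sum_sigma, Es, Finset.mul_sum]
    apply Finset.sum_congr rfl
    intro u hu
    dsimp only
    rw [Finset.sum_const, (Finset.mem_powersetCard.1 hu).2, nsmul_eq_mul]
    push_cast
    ring
  rw [lhs_eq, rhs_eq]
  apply Finset.sum_nbij' (i := fun p => (⟨insert p.1 p.2, p.1⟩ : Σ _ : Finset (Fin n), Fin n))
    (j := fun p => (⟨p.2, p.1.erase p.2⟩ : Σ _ : Fin n, Finset (Fin n)))
  · rintro ⟨i, t⟩ hp
    rw [Finset.mem_sigma] at hp
    obtain ⟨his, ht⟩ := hp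
    obtain ⟨hts, htc⟩ := Finset.mem_powersetCard.1 ht
    have hit : i ∉ t := fun h => (Finset.notMem_erase i s) (hts h)
    rw [Finset.mem_sigma]
    constructor
    · rw [Finset.mem_powersetCard]
      exact ⟨Finset.insert_subset his (hts.trans (Finset.erase_subset i s)),
        by rw [Finset.card_insert_of_notMem hit, htc]⟩
    · exact Finset.mem_insert_self i t
  · rintro ⟨u, i⟩ hp
    rw [Finset.mem_sigma] at hp
    obtain ⟨hu, hiu⟩ := hp
    obtain ⟨hus, huc⟩ := Finset.mem_powersetCard.1 hu
    rw [Finset.mem_sigma]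
    constructor
    · exact hus hiu
    · rw [Finset.mem_powersetCard]
      exact ⟨Finset.erase_subset_erase i hus, by rw [Finset.card_erase_of_mem hiu, huc]; omega⟩
  · rintro ⟨i, t⟩ hp
    rw [Finset.mem_sigma] at hp
    obtain ⟨_, ht⟩ := hp
    have hit : i ∉ t := fun h => (Finset.notMem_erase i s)
      ((Finset.mem_powersetCard.1 ht).1 h)
    simp [Finset.erase_insert hit]
  · rintro ⟨u, i⟩ hp
    rw [Finset.mem_sigma] at hp
    simp [Finset.insert_erase hp.2]
  · rintro ⟨i, t⟩ _
    rfl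

lemma Es_diff (lam : Fin n → ℝ) {i j : Fin n} (hij : i ≠ j) (r : ℕ) :
    Es lam (Finset.univ.erase j) (r + 1) - Es lam (Finset.univ.erase i) (r + 1)
      = (lam i - lam j) * Es lam ((Finset.univ.erase i).erase j) r := by
  have h1 : i ∈ (Finset.univ : Finset (Fin n)).erase j :=
    Finset.mem_erase.2 ⟨hij, Finset.mem_univ i⟩
  have h2 : j ∈ (Finset.univ : Finset (Fin n)).erase i :=
    Finset.mem_erase.2 ⟨hij.symm, Finset.mem_univ j⟩
  rw [Es_erase lam _ h1 r, Es_erase lam _ h2 r, Finset.erase_right_comm]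
  ring

end Stmt1Aux

open Stmt1Aux in
theorem stmt_1 (n k : ℕ) (hn : 2 ≤ n) (hk : 2 ≤ k) (hkn : k ≤ n)
    (lam : Fin n → ℝ) (hpos : ∀ i, 0 < lam i) :
    0 ≤ ((k : ℝ) - 1) * esymm 1 lam
        - 2 * (k : ℝ) * esymm 2 lam / esymm 1 lam
        + ((k : ℝ) + 1) * esymm (k + 1) lam / esymm k lam
    ∧ (((k : ℝ) - 1) * esymm 1 lam
        - 2 * (k : ℝ) * esymm 2 lam / esymm 1 lam
        + ((k : ℝ) + 1) * esymm (k + 1) lam / esymm k lam = 0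
      ↔ ∀ i j, lam i = lam j) := by
  obtain ⟨m, rfl⟩ : ∃ m, k = m + 2 := ⟨k - 2, by omega⟩
  have hesymm : ∀ r, esymm r lam = Es lam Finset.univ r := fun r => rfl
  have hcardu : (Finset.univ : Finset (Fin n)).card = n := by simp
  -- erase cards
  have hmemerase : ∀ {i j : Fin n}, i ≠ j → j ∈ (Finset.univ : Finset (Fin n)).erase i :=
    fun hij => Finset.mem_erase.2 ⟨hij.symm, Finset.mem_univ _⟩
  have hcard2 : ∀ {i j : Fin n}, i ≠ j → ((Finset.univ.erase i).erase j).card = n - 2 := by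
    intro i j hij
    rw [Finset.card_erase_of_mem (hmemerase hij), Finset.card_erase_of_mem (Finset.mem_univ i),
      hcardu]
    omega
  have hEu_pos : ∀ {i j : Fin n}, i ≠ j →
      0 < Es lam ((Finset.univ.erase i).erase j) m := by
    intro i j hij
    exact Es_pos lam hpos _ (by rw [hcard2 hij]; omega)
  -- basic quantities
  have hS1pos : 0 < Es lam Finset.univ 1 := Es_pos lam hpos _ (by omega)
  have hSkpos : 0 < Es lam Finset.univ (m + 2) := Es_pos lam hpos _ (by omega)
  have hA : ∀ (i : Fin n) (r : ℕ), Es lam Finset.univ (r + 1)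
      = Es lam (Finset.univ.erase i) (r + 1) + lam i * Es lam (Finset.univ.erase i) r :=
    fun i r => Es_erase lam Finset.univ (Finset.mem_univ i) r
  have hB : ∀ r : ℕ, ∑ i, lam i * Es lam (Finset.univ.erase i) r
      = ((r : ℝ) + 1) * Es lam Finset.univ (r + 1) := fun r => sum_insert_eq lam Finset.univ r
  have hS1sum : Es lam Finset.univ 1 = ∑ i, lam i := by
    have h := hB 0
    simp only [Es_zero, mul_one, Nat.cast_zero, zero_add, one_mul] at h
    exact h.symm
  have hQ : Es lam Finset.univ 1 * Es lam Finset.univ 1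
      = (∑ i, lam i ^ 2) + 2 * Es lam Finset.univ 2 := by
    have h1 := hB 1
    norm_num at h1
    calc Es lam Finset.univ 1 * Es lam Finset.univ 1
        = ∑ i, lam i * Es lam Finset.univ 1 := by rw [hS1sum, Finset.sum_mul]
      _ = ∑ i, (lam i * Es lam (Finset.univ.erase i) 1 + lam i ^ 2) := by
          apply Finset.sum_congr rfl
          intro i _
          rw [show (1 : ℕ) = 0 + 1 from rfl, hA i 0, Es_zero]
          ring
      _ = (∑ i, lam i * Es lam (Finset.univ.erase i) 1) + ∑ i, lam i ^ 2 :=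
          Finset.sum_add_distrib
      _ = _ := by rw [h1]; ring
  have hkSk : ∑ i, lam i * Es lam (Finset.univ.erase i) (m + 1)
      = ((m : ℝ) + 2) * Es lam Finset.univ (m + 2) := by
    have h := hB (m + 1)
    push_cast at h
    convert h using 2
    ring
  have hR : Es lam Finset.univ 1 * Es lam Finset.univ (m + 2)
      = ((m : ℝ) + 3) * Es lam Finset.univ (m + 3)
        + ∑ i, lam i ^ 2 * Es lam (Finset.univ.erase i) (m + 1) := by
    have h := hB (m + 2)
    push_cast at h
    calc Es lam Finset.univ 1 * Es lam Finset.univ (m + 2)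
        = ∑ i, lam i * Es lam Finset.univ (m + 2) := by rw [hS1sum, Finset.sum_mul]
      _ = ∑ i, (lam i * Es lam (Finset.univ.erase i) (m + 2)
            + lam i ^ 2 * Es lam (Finset.univ.erase i) (m + 1)) := by
          apply Finset.sum_congr rfl
          intro i _
          rw [hA i (m + 1)]
          ring
      _ = (∑ i, lam i * Es lam (Finset.univ.erase i) (m + 2))
            + ∑ i, lam i ^ 2 * Es lam (Finset.univ.erase i) (m + 1) :=
          Finset.sum_add_distrib
      _ = _ := by rw [h]; ring
  -- the key polynomial quantity
  have hT : ((m : ℝ) + 1) * Es lam Finset.univ 1 * Es lam Finset.univ 1 * Es lam Finset.univ (m + 2)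
      - 2 * ((m : ℝ) + 2) * Es lam Finset.univ 2 * Es lam Finset.univ (m + 2)
      + ((m : ℝ) + 3) * Es lam Finset.univ (m + 3) * Es lam Finset.univ 1
      = ((m : ℝ) + 2) * (∑ i, lam i ^ 2) * Es lam Finset.univ (m + 2)
        - Es lam Finset.univ 1 * ∑ i, lam i ^ 2 * Es lam (Finset.univ.erase i) (m + 1) := by
    linear_combination ((m : ℝ) + 2) * Es lam Finset.univ (m + 2) * hQ
      - Es lam Finset.univ 1 * hR
  have hD : ((m : ℝ) + 2) * (∑ i, lam i ^ 2) * Es lam Finset.univ (m + 2)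
      - Es lam Finset.univ 1 * ∑ i, lam i ^ 2 * Es lam (Finset.univ.erase i) (m + 1)
      = ∑ i, ∑ j, lam i ^ 2 * lam j * (Es lam (Finset.univ.erase j) (m + 1)
          - Es lam (Finset.univ.erase i) (m + 1)) := by
    calc ((m : ℝ) + 2) * (∑ i, lam i ^ 2) * Es lam Finset.univ (m + 2)
          - Es lam Finset.univ 1 * ∑ i, lam i ^ 2 * Es lam (Finset.univ.erase i) (m + 1)
        = (∑ i, lam i ^ 2) * (((m : ℝ) + 2) * Es lam Finset.univ (m + 2))
            - (∑ i, lam i ^ 2 * Es lam (Finset.univ.erase i) (m + 1)) * Es lam Finset.univ 1 := by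
          ring
      _ = (∑ i, lam i ^ 2) * (∑ j, lam j * Es lam (Finset.univ.erase j) (m + 1))
            - (∑ i, lam i ^ 2 * Es lam (Finset.univ.erase i) (m + 1)) * (∑ j, lam j) := by
          rw [← hkSk, hS1sum]
      _ = ∑ i, ∑ j, (lam i ^ 2 * (lam j * Es lam (Finset.univ.erase j) (m + 1))
            - lam i ^ 2 * Es lam (Finset.univ.erase i) (m + 1) * lam j) := by
          rw [Finset.sum_mul_sum, Finset.sum_mul_sum, ← Finset.sum_sub_distrib]
          apply Finset.sum_congr rfl
          intro i _
          rw [← Finset.sum_sub_distrib]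
      _ = _ := by
          apply Finset.sum_congr rfl
          intro i _
          apply Finset.sum_congr rfl
          intro j _
          ring
  have hswap : (∑ i, ∑ j, lam i ^ 2 * lam j * (Es lam (Finset.univ.erase j) (m + 1)
          - Es lam (Finset.univ.erase i) (m + 1)))
      = ∑ i, ∑ j, lam j ^ 2 * lam i * (Es lam (Finset.univ.erase i) (m + 1)
          - Es lam (Finset.univ.erase j) (m + 1)) := Finset.sum_comm
  have h2D : 2 * (∑ i, ∑ j, lam i ^ 2 * lam j * (Es lam (Finset.univ.erase j) (m + 1)
          - Es lam (Finset.univ.erase i) (m + 1)))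
      = ∑ i, ∑ j, lam i * lam j * (lam i - lam j) ^ 2
          * Es lam ((Finset.univ.erase i).erase j) m := by
    calc 2 * (∑ i, ∑ j, lam i ^ 2 * lam j * (Es lam (Finset.univ.erase j) (m + 1)
            - Es lam (Finset.univ.erase i) (m + 1)))
        = (∑ i, ∑ j, lam i ^ 2 * lam j * (Es lam (Finset.univ.erase j) (m + 1)
            - Es lam (Finset.univ.erase i) (m + 1)))
          + ∑ i, ∑ j, lam j ^ 2 * lam i * (Es lam (Finset.univ.erase i) (m + 1)
            - Es lam (Finset.univ.erase j) (m + 1)) := by rw [← hswap]; ring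
      _ = ∑ i, ∑ j, (lam i ^ 2 * lam j * (Es lam (Finset.univ.erase j) (m + 1)
            - Es lam (Finset.univ.erase i) (m + 1))
          + lam j ^ 2 * lam i * (Es lam (Finset.univ.erase i) (m + 1)
            - Es lam (Finset.univ.erase j) (m + 1))) := by
          rw [← Finset.sum_add_distrib]
          apply Finset.sum_congr rfl
          intro i _
          rw [← Finset.sum_add_distrib]
      _ = _ := by
          apply Finset.sum_congr rfl
          intro i _
          apply Finset.sum_congr rfl
          intro j _
          by_cases hij : i = j
          · subst hij; simp
          · linear_combination (lam i ^ 2 * lam j - lam j ^ 2 * lam i) * Es_diff lam hij m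
  set Dsum := ∑ i, ∑ j, lam i * lam j * (lam i - lam j) ^ 2
      * Es lam ((Finset.univ.erase i).erase j) m with hDsumdef
  have hFnn : ∀ i j : Fin n, 0 ≤ lam i * lam j * (lam i - lam j) ^ 2
      * Es lam ((Finset.univ.erase i).erase j) m := by
    intro i j
    by_cases hij : i = j
    · subst hij; simp
    · exact mul_nonneg (mul_nonneg (mul_nonneg (hpos i).le (hpos j).le) (sq_nonneg _))
        (hEu_pos hij).le
  have hDsum_nonneg : 0 ≤ Dsum :=
    Finset.sum_nonneg fun i _ => Finset.sum_nonneg fun j _ => hFnn i j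
  -- relate the goal expression to Dsum
  have hXeq : ((↑(m + 2) : ℝ) - 1) * esymm 1 lam
        - 2 * (↑(m + 2) : ℝ) * esymm 2 lam / esymm 1 lam
        + ((↑(m + 2) : ℝ) + 1) * esymm (m + 2 + 1) lam / esymm (m + 2) lam
      = Dsum / (2 * (Es lam Finset.univ 1 * Es lam Finset.univ (m + 2))) := by
    rw [eq_div_iff (by positivity)]
    rw [hesymm, hesymm, hesymm, hesymm]
    rw [← h2D, ← hD, ← hT]
    push_cast
    field_simp
    ring
  constructor
  · rw [hXeq]
    positivity
  · rw [hXeq, div_eq_zero_iff]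
    have hden : (2 * (Es lam Finset.univ 1 * Es lam Finset.univ (m + 2))) ≠ 0 := by positivity
    constructor
    · rintro (h | h)
      · intro i j
        by_cases hij : i = j
        · rw [hij]
        · have h1 := (Finset.sum_eq_zero_iff_of_nonneg
            (fun i _ => Finset.sum_nonneg fun j _ => hFnn i j)).1 h i (Finset.mem_univ i)
          have h2 := (Finset.sum_eq_zero_iff_of_nonneg
            (fun j _ => hFnn i j)).1 h1 j (Finset.mem_univ j)
          have hfac : (lam i - lam j) ^ 2
              * (lam i * lam j * Es lam ((Finset.univ.erase i).erase j) m) = 0 := by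
            rw [← h2]; ring
          have hpos' : 0 < lam i * lam j * Es lam ((Finset.univ.erase i).erase j) m :=
            mul_pos (mul_pos (hpos i) (hpos j)) (hEu_pos hij)
          rcases mul_eq_zero.1 hfac with h3 | h3
          · have := (pow_eq_zero_iff (by norm_num : (2:ℕ) ≠ 0)).1 h3
            linarith [sub_eq_zero.1 this]
          · exact absurd h3 hpos'.ne'
      · exact absurd h hden
    · intro hall
      left
      rw [hDsumdef]
      apply Finset.sum_eq_zero
      intro i _
      apply Finset.sum_eq_zero
      intro j _
      rw [sub_eq_zero.2 (hall i j)]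
      ring
end

section
/- Let n ≥ 2 and let λ = (λ_1, …, λ_n) ∈ Γ_+ (i.e. λ_i > 0 for all i). Then σ_1(λ) − 4σ_2(λ)/σ_1(λ) + 3σ_3(λ)/σ_2(λ) ≥ 0, and equality holds if and only if λ_1 = λ_2 = ⋯ = λ_n. -/
/-!
Newton's identities turn the numerator of the expression, over the common denominator
`σ₁ σ₂`, into `σ₁² σ₂ - 4 σ₂² + 3 σ₁ σ₃ = p₁ p₃ - p₂²`, where `pₖ = ∑ λᵢᵏ`. By Lagrange's identity
`2 (p₁ p₃ - p₂²) = ∑ᵢ ∑ⱼ λᵢ λⱼ (λᵢ - λⱼ)²`, which is nonnegative on `Γ₊` and vanishes exactly when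
all `λᵢ` coincide.
-/

open Finset

section PowerSums

variable {ι R : Type*} [Fintype ι]

lemma two_mul_sum_mul_sum_pow_three_sub_sq [CommRing R] (f : ι → R) :
    2 * ((∑ i, f i) * (∑ i, f i ^ 3) - (∑ i, f i ^ 2) ^ 2) =
      ∑ i, ∑ j, f i * f j * (f i - f j) ^ 2 := by
  calc 2 * ((∑ i, f i) * (∑ i, f i ^ 3) - (∑ i, f i ^ 2) ^ 2)
      = (∑ i, ∑ j, f i ^ 3 * f j) + (∑ i, ∑ j, f i * f j ^ 3)
          - 2 * ∑ i, ∑ j, f i ^ 2 * f j ^ 2 := by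
        simp only [← Finset.sum_mul_sum]; ring
    _ = ∑ i, ∑ j, f i * f j * (f i - f j) ^ 2 := by
        simp only [Finset.mul_sum, ← Finset.sum_add_distrib, ← Finset.sum_sub_distrib]
        exact Finset.sum_congr rfl fun i _ => Finset.sum_congr rfl fun j _ => by ring

variable [CommRing R] [LinearOrder R] [IsStrictOrderedRing R]

lemma sq_sum_sq_le_sum_mul_sum_pow_three {f : ι → R} (hf : ∀ i, 0 ≤ f i) :
    (∑ i, f i ^ 2) ^ 2 ≤ (∑ i, f i) * ∑ i, f i ^ 3 := by
  have hsum : 0 ≤ ∑ i, ∑ j, f i * f j * (f i - f j) ^ 2 :=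
    sum_nonneg fun i _ => sum_nonneg fun j _ => by have := hf i; have := hf j; positivity
  linarith [two_mul_sum_mul_sum_pow_three_sub_sq f]

lemma sq_sum_sq_eq_sum_mul_sum_pow_three_iff {f : ι → R} (hf : ∀ i, 0 < f i) :
    (∑ i, f i ^ 2) ^ 2 = (∑ i, f i) * ∑ i, f i ^ 3 ↔ ∀ i j, f i = f j := by
  have hterm : ∀ i j, 0 ≤ f i * f j * (f i - f j) ^ 2 := fun i j => by
    have := hf i; have := hf j; positivity
  have hterm_eq_zero : ∀ i j, f i * f j * (f i - f j) ^ 2 = 0 ↔ f i = f j := fun i j => by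
    simp [(hf i).ne', (hf j).ne', sub_eq_zero]
  rw [← sub_eq_zero, ← (mul_right_injective₀ (two_ne_zero' R)).eq_iff, mul_zero,
    ← neg_sub, mul_neg, neg_eq_zero, two_mul_sum_mul_sum_pow_three_sub_sq,
    sum_eq_zero_iff_of_nonneg fun i _ => sum_nonneg fun j _ => hterm i j]
  simp only [mem_univ, true_implies, sum_eq_zero_iff_of_nonneg fun j _ => hterm _ j, hterm_eq_zero]

end PowerSums

section Esymm

variable {n : ℕ}

lemma eval_esymm (k : ℕ) (lam : Fin n → ℝ) :
    MvPolynomial.eval lam (MvPolynomial.esymm (Fin n) ℝ k) = esymm k lam := by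
  simp [MvPolynomial.esymm, esymm]

lemma esymm_zero (lam : Fin n → ℝ) : esymm 0 lam = 1 := by
  simp [esymm]

lemma esymm_one (lam : Fin n → ℝ) : esymm 1 lam = ∑ i, lam i := by
  simp [esymm, powersetCard_one]

lemma esymm_pos {k : ℕ} (hk : k ≤ n) {lam : Fin n → ℝ} (hpos : ∀ i, 0 < lam i) :
    0 < esymm k lam :=
  sum_pos (fun s _ => prod_pos fun i _ => hpos i) (powersetCard_nonempty.2 (by simpa using hk))

lemma mul_esymm_eq_sum (k : ℕ) (lam : Fin n → ℝ) :
    k * esymm k lam = (-1) ^ (k + 1) *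
      ∑ a ∈ antidiagonal k with a.1 < k, (-1) ^ a.1 * esymm a.1 lam * ∑ i, lam i ^ a.2 := by
  simpa [eval_esymm, MvPolynomial.psum] using
    congrArg (MvPolynomial.eval lam) (MvPolynomial.mul_esymm_eq_sum (Fin n) ℝ k)

lemma two_mul_esymm_two (lam : Fin n → ℝ) :
    2 * esymm 2 lam = (∑ i, lam i) ^ 2 - ∑ i, lam i ^ 2 := by
  have h := mul_esymm_eq_sum 2 lam
  norm_num only [sum_filter, Nat.sum_antidiagonal_eq_sum_range_succ_mk, sum_range_succ, range_zero,
    sum_empty, if_true, if_false, pow_one, esymm_zero, esymm_one] at h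
  linear_combination h

lemma three_mul_esymm_three (lam : Fin n → ℝ) :
    3 * esymm 3 lam = ∑ i, lam i ^ 3 - (∑ i, lam i) * ∑ i, lam i ^ 2
      + esymm 2 lam * ∑ i, lam i := by
  have h := mul_esymm_eq_sum 3 lam
  norm_num only [sum_filter, Nat.sum_antidiagonal_eq_sum_range_succ_mk, sum_range_succ, range_zero,
    sum_empty, if_true, if_false, pow_one, esymm_zero, esymm_one] at h
  linear_combination h

lemma esymm_one_sq_mul_esymm_two_sub_add_eq (lam : Fin n → ℝ) :
    esymm 1 lam ^ 2 * esymm 2 lam - 4 * esymm 2 lam ^ 2 + 3 * esymm 1 lam * esymm 3 lam =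
      (∑ i, lam i) * (∑ i, lam i ^ 3) - (∑ i, lam i ^ 2) ^ 2 := by
  rw [esymm_one]
  linear_combination ((∑ i, lam i ^ 2) - 2 * esymm 2 lam) * two_mul_esymm_two lam
    + (∑ i, lam i) * three_mul_esymm_three lam

end Esymm

theorem stmt_4 (n : ℕ) (hn : 2 ≤ n) (lam : Fin n → ℝ) (hpos : ∀ i, 0 < lam i) :
    0 ≤ esymm 1 lam - 4 * esymm 2 lam / esymm 1 lam
        + 3 * esymm 3 lam / esymm 2 lam
    ∧ (esymm 1 lam - 4 * esymm 2 lam / esymm 1 lam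
        + 3 * esymm 3 lam / esymm 2 lam = 0
      ↔ ∀ i j, lam i = lam j) := by
  have h1 : 0 < esymm 1 lam := esymm_pos (by omega) hpos
  have h2 : 0 < esymm 2 lam := esymm_pos hn hpos
  have hexpr : esymm 1 lam - 4 * esymm 2 lam / esymm 1 lam + 3 * esymm 3 lam / esymm 2 lam =
      ((∑ i, lam i) * (∑ i, lam i ^ 3) - (∑ i, lam i ^ 2) ^ 2) / (esymm 1 lam * esymm 2 lam) := by
    rw [← esymm_one_sq_mul_esymm_two_sub_add_eq]
    field_simp
  rw [hexpr, div_eq_zero_iff, sub_eq_zero, eq_comm,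
    sq_sum_sq_eq_sum_mul_sum_pow_three_iff hpos, or_iff_left (mul_pos h1 h2).ne']
  exact ⟨div_nonneg (sub_nonneg.2 (sq_sum_sq_le_sum_mul_sum_pow_three fun i => (hpos i).le))
    (mul_pos h1 h2).le, Iff.rfl⟩
end

section
/- Let n ≥ 2 and δ = (√(n² + 8n − 8) + 2 − n)/(2(n−1)). Let A = (A_{ij}) be a symmetric real array indexed by pairs i ≠ j in {1,…,n} and B = (B_p) ∈ ℝ^n with B_p > 0 for all p, and suppose B_p ≤ A_{ij} ≤ (1+δ)B_p for all p and all i ≠ j. Then for every totally symmetric real 3-tensor h = (h_{ijp}) on {1,…,n}, Σ_{i≠j} Σ_{p=1}^n A_{ij}(h_{ijp}² − h_{iip}h_{jjp}) + Σ_{p=1}^n B_p(Σ_{i=1}^n h_{iip})² ≥ 0. -/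
open Finset

private lemma aux_erase_sub {n : ℕ} (G : Fin n → Fin n → ℝ) :
    ∑ i, ∑ j ∈ Finset.univ.erase i, G i j = (∑ i, ∑ j, G i j) - ∑ i, G i i := by
  rw [← Finset.sum_sub_distrib]
  exact Finset.sum_congr rfl fun i _ => Finset.sum_erase_eq_sub (mem_univ i)

private lemma aux_offdiag {n : ℕ} (x : Fin n → ℝ) :
    ∑ i, ∑ j ∈ Finset.univ.erase i, x i * x j = (∑ i, x i)^2 - ∑ i, (x i)^2 := by
  rw [aux_erase_sub (fun i j => x i * x j), sq (∑ i, x i), Finset.sum_mul_sum]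
  congr 1
  exact Finset.sum_congr rfl fun i _ => (sq (x i)).symm

private lemma aux_key {n : ℕ} (hn : 2 ≤ n) {δ : ℝ} (hδ0 : 0 < δ)
    (hq : ((n:ℝ)-1)*δ^2 + ((n:ℝ)-2)*δ = 3) (x : Fin n → ℝ) (p : Fin n) :
    δ * (∑ q, |x q|)^2 + 2 * x p ^ 2 ≤ (3+δ) * ∑ q, (x q)^2 := by
  have h1 : ∑ q, |x q| = |x p| + ∑ q ∈ Finset.univ.erase p, |x q| :=
    (Finset.add_sum_erase _ _ (mem_univ p)).symm
  have h2 : ∑ q, (x q)^2 = x p ^ 2 + ∑ q ∈ Finset.univ.erase p, (x q)^2 :=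
    (Finset.add_sum_erase _ _ (mem_univ p)).symm
  set a := |x p| with ha_def
  set s := ∑ q ∈ Finset.univ.erase p, |x q| with hs_def
  set T := ∑ q ∈ Finset.univ.erase p, (x q)^2 with hT_def
  have hCS : s^2 ≤ ((n:ℝ)-1) * T := by
    have hcs := Finset.sum_mul_sq_le_sq_mul_sq (Finset.univ.erase p)
      (fun _ => (1:ℝ)) (fun q => |x q|)
    have hcard : ∑ q ∈ Finset.univ.erase p, ((1:ℝ))^2 = ((n:ℝ)-1) := by
      rw [Finset.sum_const]
      rw [Finset.card_erase_of_mem (mem_univ p), Finset.card_univ, Fintype.card_fin]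
      have : ((n - 1 : ℕ) : ℝ) = (n:ℝ) - 1 := by
        have : 1 ≤ n := by omega
        push_cast [Nat.cast_sub this]
        ring
      simp [this]
    have habs : ∀ q : Fin n, |x q|^2 = (x q)^2 := fun q => sq_abs _
    calc s^2 = (∑ q ∈ Finset.univ.erase p, (1:ℝ) * |x q|)^2 := by simp [hs_def]
      _ ≤ (∑ q ∈ Finset.univ.erase p, ((1:ℝ))^2) * (∑ q ∈ Finset.univ.erase p, |x q|^2) := hcs
      _ = ((n:ℝ)-1) * T := by
          rw [hcard]
          congr 1
          exact Finset.sum_congr rfl fun q _ => habs q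
  have ha : 0 ≤ a := abs_nonneg _
  have hs : 0 ≤ s := Finset.sum_nonneg fun q _ => abs_nonneg _
  have hT : 0 ≤ T := Finset.sum_nonneg fun q _ => sq_nonneg _
  have hxp : x p ^ 2 = a^2 := (sq_abs _).symm
  rw [h1, h2, hxp]
  have hq' : (3+δ)*T = ((n:ℝ)-1)*δ^2*T + ((n:ℝ)-1)*δ*T := by
    linear_combination (-T) * hq
  nlinarith [sq_nonneg (a - δ*s), mul_nonneg hδ0.le (sub_nonneg.2 hCS),
    mul_nonneg (mul_nonneg hδ0.le hδ0.le) (sub_nonneg.2 hCS)]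

theorem stmt_15 (n : ℕ) (hn : 2 ≤ n)
    (δ : ℝ) (hδ : δ = (Real.sqrt ((n : ℝ) ^ 2 + 8 * n - 8) + 2 - n) / (2 * ((n : ℝ) - 1)))
    (A : Fin n → Fin n → ℝ) (hA : ∀ i j, i ≠ j → A i j = A j i)
    (B : Fin n → ℝ) (hB : ∀ p, 0 < B p)
    (hpinch : ∀ p i j, i ≠ j → B p ≤ A i j ∧ A i j ≤ (1 + δ) * B p)
    (h : Fin n → Fin n → Fin n → ℝ)
    (hsym1 : ∀ i j p, h i j p = h j i p)
    (hsym2 : ∀ i j p, h i j p = h i p j) :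
    0 ≤ ∑ i, ∑ j ∈ Finset.univ.erase i, ∑ p,
          A i j * (h i j p ^ 2 - h i i p * h j j p)
        + ∑ p, B p * (∑ i, h i i p) ^ 2 := by
  have hm : (2:ℝ) ≤ (n:ℝ) := by exact_mod_cast hn
  set r := Real.sqrt ((n : ℝ) ^ 2 + 8 * n - 8) with hr_def
  have hr0 : 0 ≤ r := Real.sqrt_nonneg _
  have hrsq : r^2 = (n:ℝ)^2 + 8*n - 8 := Real.sq_sqrt (by nlinarith)
  have hden : (0:ℝ) < 2*((n:ℝ)-1) := by linarith
  have hδ0 : 0 < δ := by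
    rw [hδ]
    apply div_pos _ hden
    nlinarith [hrsq, hr0, hm]
  have h2δ : δ * (2*((n:ℝ)-1)) = r + 2 - n := (eq_div_iff hden.ne').mp hδ
  have hq : ((n:ℝ)-1)*δ^2 + ((n:ℝ)-2)*δ = 3 := by
    have h4 : (0:ℝ) < 4*((n:ℝ)-1) := by linarith
    nlinarith [h2δ, hrsq, sq_nonneg (δ * (2*((n:ℝ)-1)) - (r + 2 - n))]
  -- termwise lower bound for the inner p-sum, for i ≠ j
  have hstep : ∀ i j : Fin n, i ≠ j →
      B j * (h i i j)^2 + B i * (h j j i)^2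
        - ∑ p, (B p * (h i i p * h j j p) + δ * (B p * (|h i i p| * |h j j p|)))
      ≤ ∑ p, A i j * (h i j p ^ 2 - h i i p * h j j p) := by
    intro i j hij
    have hA0 : 0 ≤ A i j := le_trans (hB i).le (hpinch i i j hij).1
    have e : ∑ p, A i j * (h i j p ^ 2 - h i i p * h j j p)
        = (∑ p, A i j * h i j p ^ 2) - ∑ p, A i j * (h i i p * h j j p) := by
      rw [← Finset.sum_sub_distrib]
      exact Finset.sum_congr rfl fun p _ => by ring
    rw [e]
    have hsq : B j * (h i i j)^2 + B i * (h j j i)^2 ≤ ∑ p, A i j * h i j p ^ 2 := by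
      have hsub := Finset.sum_le_sum_of_subset_of_nonneg
        (Finset.subset_univ ({i,j} : Finset (Fin n)))
        (fun p _ _ => mul_nonneg hA0 (sq_nonneg (h i j p)))
      rw [Finset.sum_pair hij] at hsub
      have e1 : h i j i = h i i j := by rw [hsym2]
      have e2 : h i j j = h j j i := by rw [hsym1, hsym2]
      have b1 : B j * (h i i j)^2 ≤ A i j * h i j i ^ 2 := by
        rw [e1]; exact mul_le_mul_of_nonneg_right (hpinch j i j hij).1 (sq_nonneg _)
      have b2 : B i * (h j j i)^2 ≤ A i j * h i j j ^ 2 := by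
        rw [e2]; exact mul_le_mul_of_nonneg_right (hpinch i i j hij).1 (sq_nonneg _)
      linarith
    have hcr : ∑ p, A i j * (h i i p * h j j p)
        ≤ ∑ p, (B p * (h i i p * h j j p) + δ * (B p * (|h i i p| * |h j j p|))) := by
      refine Finset.sum_le_sum fun p _ => ?_
      obtain ⟨hlo, hhi⟩ := hpinch p i j hij
      have hBp := hB p
      have habs : h i i p * h j j p ≤ |h i i p| * |h j j p| := by
        rw [← abs_mul]; exact le_abs_self _
      have habs0 : 0 ≤ |h i i p| * |h j j p| := mul_nonneg (abs_nonneg _) (abs_nonneg _)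
      nlinarith [mul_le_mul_of_nonneg_left habs (sub_nonneg.2 hlo),
        mul_le_mul_of_nonneg_right (by linarith : A i j - B p ≤ δ * B p) habs0]
    linarith
  have hmain : ∑ i, ∑ j ∈ Finset.univ.erase i,
      (B j * (h i i j)^2 + B i * (h j j i)^2
        - ∑ p, (B p * (h i i p * h j j p) + δ * (B p * (|h i i p| * |h j j p|))))
      ≤ ∑ i, ∑ j ∈ Finset.univ.erase i, ∑ p,
          A i j * (h i j p ^ 2 - h i i p * h j j p) :=
    Finset.sum_le_sum fun i _ => Finset.sum_le_sum fun j hj =>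
      hstep i j (Finset.ne_of_mem_erase hj).symm
  -- the identity re-grouping the lower bound slice by slice
  have hP1 : ∑ i, ∑ j ∈ Finset.univ.erase i, (B j * (h i i j)^2 + B i * (h j j i)^2)
      = ∑ p, B p * (2 * ((∑ q, (h q q p)^2) - (h p p p)^2)) := by
    rw [aux_erase_sub (fun i j => B j * (h i i j)^2 + B i * (h j j i)^2)]
    have hswap : (∑ i, ∑ j, B i * (h j j i)^2) = ∑ i, ∑ j, B j * (h i i j)^2 :=
      Finset.sum_comm
    have hsplit : (∑ i, ∑ j, (B j * (h i i j)^2 + B i * (h j j i)^2))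
        = (∑ i, ∑ j, B j * (h i i j)^2) + ∑ i, ∑ j, B i * (h j j i)^2 := by
      rw [← Finset.sum_add_distrib]
      exact Finset.sum_congr rfl fun i _ => Finset.sum_add_distrib
    have hfull : (∑ i, ∑ j, B j * (h i i j)^2) = ∑ p, B p * ∑ q, (h q q p)^2 := by
      rw [Finset.sum_comm]
      exact Finset.sum_congr rfl fun p _ => (Finset.mul_sum _ _ _).symm
    rw [hsplit, hswap, hfull]
    rw [← Finset.sum_add_distrib, ← Finset.sum_sub_distrib]
    exact Finset.sum_congr rfl fun p _ => by ring
  have hP2 : ∑ i, ∑ j ∈ Finset.univ.erase i,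
      (∑ p, (B p * (h i i p * h j j p) + δ * (B p * (|h i i p| * |h j j p|))))
      = ∑ p, (B p * ((∑ i, h i i p)^2 - ∑ i, (h i i p)^2)
          + δ * (B p * ((∑ i, |h i i p|)^2 - ∑ i, (h i i p)^2))) := by
    have hswap1 : ∀ i : Fin n, ∑ j ∈ Finset.univ.erase i,
        (∑ p, (B p * (h i i p * h j j p) + δ * (B p * (|h i i p| * |h j j p|))))
        = ∑ p, ∑ j ∈ Finset.univ.erase i,
          (B p * (h i i p * h j j p) + δ * (B p * (|h i i p| * |h j j p|))) :=
      fun i => Finset.sum_comm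
    calc ∑ i, ∑ j ∈ Finset.univ.erase i,
          (∑ p, (B p * (h i i p * h j j p) + δ * (B p * (|h i i p| * |h j j p|))))
        = ∑ i, ∑ p, ∑ j ∈ Finset.univ.erase i,
            (B p * (h i i p * h j j p) + δ * (B p * (|h i i p| * |h j j p|))) :=
          Finset.sum_congr rfl fun i _ => hswap1 i
      _ = ∑ p, ∑ i, ∑ j ∈ Finset.univ.erase i,
            (B p * (h i i p * h j j p) + δ * (B p * (|h i i p| * |h j j p|))) :=
          Finset.sum_comm
      _ = ∑ p, (B p * ((∑ i, h i i p)^2 - ∑ i, (h i i p)^2)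
            + δ * (B p * ((∑ i, |h i i p|)^2 - ∑ i, (h i i p)^2))) := by
          refine Finset.sum_congr rfl fun p _ => ?_
          have hsplit : ∑ i, ∑ j ∈ Finset.univ.erase i,
              (B p * (h i i p * h j j p) + δ * (B p * (|h i i p| * |h j j p|)))
              = B p * (∑ i, ∑ j ∈ Finset.univ.erase i, h i i p * h j j p)
                + δ * (B p * (∑ i, ∑ j ∈ Finset.univ.erase i, |h i i p| * |h j j p|)) := by
            rw [Finset.mul_sum, Finset.mul_sum, Finset.mul_sum, ← Finset.sum_add_distrib]
            refine Finset.sum_congr rfl fun i _ => ?_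
            rw [Finset.mul_sum, Finset.mul_sum, Finset.mul_sum, ← Finset.sum_add_distrib]
          rw [hsplit, aux_offdiag (fun i => h i i p), aux_offdiag (fun i => |h i i p|)]
          have habs : ∑ i, |h i i p|^2 = ∑ i, (h i i p)^2 :=
            Finset.sum_congr rfl fun i _ => sq_abs _
          rw [habs]
  have hfin : 0 ≤ ∑ p, B p * ((3+δ) * (∑ q, (h q q p)^2) - 2*(h p p p)^2
      - δ * (∑ q, |h q q p|)^2) := by
    refine Finset.sum_nonneg fun p _ => mul_nonneg (hB p).le ?_
    have hk := aux_key hn hδ0 hq (fun q => h q q p) p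
    linarith
  have hid : (∑ i, ∑ j ∈ Finset.univ.erase i,
      (B j * (h i i j)^2 + B i * (h j j i)^2
        - ∑ p, (B p * (h i i p * h j j p) + δ * (B p * (|h i i p| * |h j j p|)))))
      + ∑ p, B p * (∑ i, h i i p)^2
      = ∑ p, B p * ((3+δ) * (∑ q, (h q q p)^2) - 2*(h p p p)^2
          - δ * (∑ q, |h q q p|)^2) := by
    have hLsplit : ∑ i, ∑ j ∈ Finset.univ.erase i,
        (B j * (h i i j)^2 + B i * (h j j i)^2
          - ∑ p, (B p * (h i i p * h j j p) + δ * (B p * (|h i i p| * |h j j p|))))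
        = (∑ i, ∑ j ∈ Finset.univ.erase i, (B j * (h i i j)^2 + B i * (h j j i)^2))
          - ∑ i, ∑ j ∈ Finset.univ.erase i,
            (∑ p, (B p * (h i i p * h j j p) + δ * (B p * (|h i i p| * |h j j p|)))) := by
      rw [← Finset.sum_sub_distrib]
      refine Finset.sum_congr rfl fun i _ => ?_
      rw [← Finset.sum_sub_distrib]
    rw [hLsplit, hP1, hP2]
    rw [← Finset.sum_sub_distrib, ← Finset.sum_add_distrib]
    exact Finset.sum_congr rfl fun p _ => by ring
  linarith [hmain, hfin, hid]
end

section
/- Let n ≥ 2 and δ = (√(n² + 8n − 8) + 2 − n)/(2(n−1)). Let A = (A_{ijp}) be a real array indexed by triples with i ≠ j, symmetric in i and j (A_{ijp} = A_{jip}), and let B = (B_q) ∈ ℝ^n with B_q > 0 for all q, and suppose B_q ≤ A_{ijp} ≤ (1+δ)B_q for all q, all p, and all i ≠ j. Then for every totally symmetric real 3-tensor h = (h_{ijp}) on {1,…,n}, Σ_{i≠j} Σ_{p=1}^n A_{ijp}(h_{ijp}² − h_{iip}h_{jjp}) + Σ_{p=1}^n B_p(Σ_{i=1}^n h_{iip})²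 ≥ 0. -/
/-!
Of the squares `A i j p * h i j p ^ 2` keep only `p ∈ {i, j}`: there `A ≥ B` and total symmetry
of `h` turn them into `2 ∑ p, B p ∑ i ≠ p, h i i p ^ 2`. The pinching bounds each cross term by
`A x y ≤ B p x y + δ B p |x y|`, and the sum of the `B p x y` is absorbed by
`B p (∑ i, h i i p) ^ 2`.
For each `p` what remains, with `x i = h i i p`, is
`2 ∑ i ≠ p, x i ^ 2 + ∑ i, x i ^ 2 - δ ∑ i ≠ j, |x i| |x j|`, which is nonnegative by Cauchy–Schwarz
on the `n - 1` coordinates `i ≠ p` precisely because `δ` is the positive root of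
`(n - 1) δ ^ 2 + (n - 2) δ = 3`.
-/

open Finset

theorem mul_le_add_mul_abs {a b δ t : ℝ} (hba : b ≤ a) (hab : a ≤ (1 + δ) * b) :
    a * t ≤ b * t + b * (δ * |t|) :=
  calc a * t = b * t + (a - b) * t := by ring
    _ ≤ b * t + (a - b) * |t| := by gcongr; exact le_abs_self t
    _ ≤ b * t + b * (δ * |t|) := by rw [← mul_assoc, mul_comm b]; gcongr; linarith

theorem delta_nonneg_and_quadratic_eq {r δ : ℝ} (hr : 1 < r)
    (hδ : δ = (Real.sqrt (r ^ 2 + 8 * r - 8) + 2 - r) / (2 * (r - 1))) :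
    0 ≤ δ ∧ (r - 1) * δ ^ 2 + (r - 2) * δ = 3 := by
  have hs := Real.sq_sqrt (show 0 ≤ r ^ 2 + 8 * r - 8 by nlinarith)
  have hs0 := Real.sqrt_nonneg (r ^ 2 + 8 * r - 8)
  have hr1 : r - 1 ≠ 0 := by linarith
  subst hδ
  generalize Real.sqrt (r ^ 2 + 8 * r - 8) = s at hs hs0
  constructor
  · apply div_nonneg _ (by linarith)
    nlinarith
  · field_simp
    linear_combination hs

theorem delta_mul_add_sq_le {m δ Q S u : ℝ} (hm : 0 ≤ m) (hδ0 : 0 ≤ δ)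
    (hδ : m * δ ^ 2 + (m - 1) * δ = 3) (hS : S ^ 2 ≤ m * Q) :
    δ * (S + u) ^ 2 ≤ (3 + δ) * Q + (1 + δ) * u ^ 2 := by
  have hm0 : 0 < m := hm.lt_of_ne fun h => by subst h; linarith
  have key : m * ((3 + δ) * Q + (1 + δ) * u ^ 2 - δ * (S + u) ^ 2)
      = (3 + δ) * (m * Q - S ^ 2) + m * (δ * S - u) ^ 2 := by
    linear_combination (-S ^ 2) * hδ
  have : 0 ≤ m * ((3 + δ) * Q + (1 + δ) * u ^ 2 - δ * (S + u) ^ 2) := by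
    rw [key]; nlinarith [sq_nonneg (δ * S - u)]
  nlinarith [(mul_nonneg_iff_of_pos_left hm0).1 this]

section Sums

variable {ι : Type*} [Fintype ι] [DecidableEq ι]

theorem sum_sum_erase_comm (f : ι → ι → ℝ) :
    ∑ i, ∑ j ∈ univ.erase i, f i j = ∑ j, ∑ i ∈ univ.erase j, f i j :=
  sum_comm' fun i j => by simp [ne_comm]

theorem sum_sum_erase_mul_self (x : ι → ℝ) :
    ∑ i, ∑ j ∈ univ.erase i, x i * x j = (∑ i, x i) ^ 2 - ∑ i, x i ^ 2 := by
  simp only [← mul_sum, sum_erase_eq_sub (mem_univ _), sum_sub_distrib, sq, sum_mul]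

theorem sum_sum_erase_mul_add_mul_swap (B : ι → ℝ) (y : ι → ι → ℝ) :
    ∑ i, ∑ j ∈ univ.erase i, (B j * y i j + B i * y j i)
      = ∑ p, 2 * (B p * ∑ i ∈ univ.erase p, y i p) := by
  rw [sum_congr rfl fun i _ => sum_add_distrib, sum_add_distrib,
    sum_sum_erase_comm fun i j => B i * y j i, ← two_mul,
    sum_sum_erase_comm fun i j => B j * y i j]
  simp only [mul_sum]

theorem delta_mul_sum_abs_sq_le (x : ι → ℝ) (p : ι) {δ : ℝ} (hδ0 : 0 ≤ δ)
    (hδ : ((Fintype.card ι : ℝ) - 1) * δ ^ 2 + ((Fintype.card ι : ℝ) - 2) * δ = 3) :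
    δ * ((∑ i, |x i|) ^ 2 - ∑ i, x i ^ 2) ≤ 2 * ∑ i ∈ univ.erase p, x i ^ 2 + ∑ i, x i ^ 2 := by
  have hpos : 0 < Fintype.card ι := Fintype.card_pos_iff.2 ⟨p⟩
  have hcard : (#(univ.erase p) : ℝ) = Fintype.card ι - 1 := by
    rw [card_erase_of_mem (mem_univ p), card_univ, Nat.cast_pred hpos]
  have hCS := sq_sum_le_card_mul_sum_sq (s := univ.erase p) (f := fun i => |x i|)
  simp only [sq_abs, hcard] at hCS
  have hm : (0 : ℝ) ≤ Fintype.card ι - 1 := sub_nonneg.2 (Nat.one_le_cast.2 hpos)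
  have := delta_mul_add_sq_le (u := |x p|) hm hδ0 (by linear_combination hδ) hCS
  rw [← add_sum_erase _ _ (mem_univ p), ← add_sum_erase univ (fun i => x i ^ 2) (mem_univ p),
    ← sq_abs (x p)]
  linarith

theorem sum_diag_sq_le_sum_mul_sq (A h : ι → ι → ι → ℝ) (B : ι → ℝ) (hB : ∀ q, 0 ≤ B q)
    (hAB : ∀ q p i j, i ≠ j → B q ≤ A i j p)
    (hsym1 : ∀ i j p, h i j p = h j i p) (hsym2 : ∀ i j p, h i j p = h i p j) :
    ∑ p, 2 * (B p * ∑ i ∈ univ.erase p, h i i p ^ 2)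
      ≤ ∑ i, ∑ j ∈ univ.erase i, ∑ p, A i j p * h i j p ^ 2 := by
  rw [← sum_sum_erase_mul_add_mul_swap]
  refine sum_le_sum fun i _ => sum_le_sum fun j hj => ?_
  have hij : i ≠ j := (ne_of_mem_erase hj).symm
  calc B j * h i i j ^ 2 + B i * h j j i ^ 2
      = B j * h i j i ^ 2 + B i * h i j j ^ 2 := by rw [hsym2 i j i, hsym1 i j j, hsym2 j i j]
    _ ≤ A i j i * h i j i ^ 2 + A i j j * h i j j ^ 2 := by
        gcongr <;> exact hAB _ _ _ _ hij
    _ = ∑ p ∈ {i, j}, A i j p * h i j p ^ 2 :=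
        (sum_pair (f := fun p => A i j p * h i j p ^ 2) hij).symm
    _ ≤ ∑ p, A i j p * h i j p ^ 2 :=
        sum_le_sum_of_subset_of_nonneg (subset_univ _) fun p _ _ =>
          mul_nonneg ((hB p).trans (hAB p p i j hij)) (sq_nonneg _)

theorem sum_mul_mul_le_of_pinched (A : ι → ι → ι → ℝ) (B : ι → ℝ) (x : ι → ι → ℝ) {δ : ℝ}
    (hAB : ∀ p i j, i ≠ j → B p ≤ A i j p ∧ A i j p ≤ (1 + δ) * B p) :
    ∑ i, ∑ j ∈ univ.erase i, ∑ p, A i j p * (x p i * x p j)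
      ≤ ∑ p, B p * ((∑ i, x p i) ^ 2 - ∑ i, x p i ^ 2
          + δ * ((∑ i, |x p i|) ^ 2 - ∑ i, x p i ^ 2)) := by
  have hswap : ∀ G : ι → ι → ι → ℝ,
      ∑ i, ∑ j ∈ univ.erase i, ∑ p, G i j p = ∑ p, ∑ i, ∑ j ∈ univ.erase i, G i j p :=
    fun G => (sum_congr rfl fun i _ => sum_comm).trans sum_comm
  rw [hswap]
  refine sum_le_sum fun p _ => ?_
  calc ∑ i, ∑ j ∈ univ.erase i, A i j p * (x p i * x p j)
      ≤ ∑ i, ∑ j ∈ univ.erase i, (B p * (x p i * x p j) + B p * (δ * (|x p i| * |x p j|))) :=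
        sum_le_sum fun i _ => sum_le_sum fun j hj => by
          obtain ⟨h1, h2⟩ := hAB p i j (ne_of_mem_erase hj).symm
          simpa only [abs_mul] using mul_le_add_mul_abs (t := x p i * x p j) h1 h2
    _ = _ := by
        have habs := sum_sum_erase_mul_self fun i => |x p i|
        simp only [sq_abs] at habs
        rw [← sum_sum_erase_mul_self, ← habs]
        simp only [mul_add, mul_sum, sum_add_distrib]

end Sums

theorem stmt_16_general (n : ℕ) (hn : 2 ≤ n)
    (δ : ℝ) (hδ : δ = (Real.sqrt ((n : ℝ) ^ 2 + 8 * n - 8) + 2 - n) / (2 * ((n : ℝ) - 1)))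
    (A : Fin n → Fin n → Fin n → ℝ)
    (B : Fin n → ℝ) (hB : ∀ q, 0 < B q)
    (hpinch : ∀ q p i j, i ≠ j → B q ≤ A i j p ∧ A i j p ≤ (1 + δ) * B q)
    (h : Fin n → Fin n → Fin n → ℝ)
    (hsym1 : ∀ i j p, h i j p = h j i p)
    (hsym2 : ∀ i j p, h i j p = h i p j) :
    0 ≤ ∑ i, ∑ j ∈ Finset.univ.erase i, ∑ p,
          A i j p * (h i j p ^ 2 - h i i p * h j j p)
        + ∑ p, B p * (∑ i, h i i p) ^ 2 := by
  obtain ⟨hδ0, hδeq⟩ := delta_nonneg_and_quadratic_eq (by exact_mod_cast hn) hδ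
  have hsq := sum_diag_sq_le_sum_mul_sq A h B (fun q => (hB q).le)
    (fun q p i j hij => (hpinch q p i j hij).1) hsym1 hsym2
  have hcross := sum_mul_mul_le_of_pinched A B (fun p i => h i i p)
    fun p i j hij => hpinch p p i j hij
  have hslot : 0 ≤ ∑ p, (2 * (B p * ∑ i ∈ univ.erase p, h i i p ^ 2)
      - B p * ((∑ i, h i i p) ^ 2 - ∑ i, h i i p ^ 2
          + δ * ((∑ i, |h i i p|) ^ 2 - ∑ i, h i i p ^ 2))
      + B p * (∑ i, h i i p) ^ 2) := sum_nonneg fun p _ => by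
    have := delta_mul_sum_abs_sq_le (fun i => h i i p) p hδ0 (by simpa using hδeq)
    nlinarith [mul_le_mul_of_nonneg_left this (hB p).le]
  rw [sum_add_distrib, sum_sub_distrib] at hslot
  simp only [mul_sub, sum_sub_distrib]
  linarith

theorem stmt_16 (n : ℕ) (hn : 2 ≤ n)
    (δ : ℝ) (hδ : δ = (Real.sqrt ((n : ℝ) ^ 2 + 8 * n - 8) + 2 - n) / (2 * ((n : ℝ) - 1)))
    (A : Fin n → Fin n → Fin n → ℝ) (hA : ∀ i j p, i ≠ j → A i j p = A j i p)
    (B : Fin n → ℝ) (hB : ∀ q, 0 < B q)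
    (hpinch : ∀ q p i j, i ≠ j → B q ≤ A i j p ∧ A i j p ≤ (1 + δ) * B q)
    (h : Fin n → Fin n → Fin n → ℝ)
    (hsym1 : ∀ i j p, h i j p = h j i p)
    (hsym2 : ∀ i j p, h i j p = h i p j) :
    0 ≤ ∑ i, ∑ j ∈ Finset.univ.erase i, ∑ p,
          A i j p * (h i j p ^ 2 - h i i p * h j j p)
        + ∑ p, B p * (∑ i, h i i p) ^ 2 :=
  stmt_16_general n hn δ hδ A B hB hpinch h hsym1 hsym2
end

section
/- Let n ≥ 2, 2 ≤ k ≤ n − 1 (or k = n with σ_{n+1} = 0), and let λ ∈ Γ_+. Then the telescoping identity (k+1)σ_{k+1}(λ)/(kσ_k(λ)) − 2σ_2(λ)/σ_1(λ) = Σ_{i=2}^{k} ( (i+1)σ_{i+1}(λ)/(iσ_i(λ)) − iσ_i(λ)/((i−1)σ_{i−1}(λ)) ) holds, and each summand satisfies (i+1)σ_{i+1}(λ)/(iσ_i(λ)) − iσ_i(λ)/((i−1)σ_{i−1}(λ)) ≥ −σ_1(λ)/(i(i−1)). -/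
open Finset

namespace Aux17
variable {n : ℕ}

noncomputable def E (lam : Fin n → ℝ) (A : Finset (Fin n)) (k : ℕ) : ℝ :=
  ∑ s ∈ A.powersetCard k, ∏ i ∈ s, lam i

lemma E_zero (lam : Fin n → ℝ) (A : Finset (Fin n)) : E lam A 0 = 1 := by
  simp [E]

lemma E_card_lt (lam : Fin n → ℝ) {A : Finset (Fin n)} {k : ℕ} (h : A.card < k) :
    E lam A k = 0 := by
  rw [E, Finset.powersetCard_eq_empty.2 h, Finset.sum_empty]

lemma E_insert (lam : Fin n → ℝ) {a : Fin n} {A : Finset (Fin n)} (ha : a ∉ A) (k : ℕ) :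
    E lam (insert a A) (k+1) = E lam A (k+1) + lam a * E lam A k := by
  rw [E, Finset.powersetCard_succ_insert ha, Finset.sum_union]
  · congr 1
    rw [Finset.sum_image, E, Finset.mul_sum]
    · refine Finset.sum_congr rfl fun s hs => ?_
      have has : a ∉ s := fun h => ha ((Finset.mem_powersetCard.1 hs).1 h)
      rw [Finset.prod_insert has]
    · intro s hs t ht hst
      have has : a ∉ s := fun h => ha ((Finset.mem_powersetCard.1 hs).1 h)
      have hat : a ∉ t := fun h => ha ((Finset.mem_powersetCard.1 ht).1 h)
      have := congrArg (Finset.erase · a) hst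
      simpa [Finset.erase_insert, has, hat] using this
  · rw [Finset.disjoint_right]
    intro s hs hs'
    obtain ⟨t, ht, rfl⟩ := Finset.mem_image.1 hs
    exact ha ((Finset.mem_powersetCard.1 hs').1 (Finset.mem_insert_self a t))

lemma E_nonneg {lam : Fin n → ℝ} (hpos : ∀ i, 0 < lam i) (A : Finset (Fin n)) (k : ℕ) :
    0 ≤ E lam A k :=
  Finset.sum_nonneg fun s _ => Finset.prod_nonneg fun i _ => (hpos i).le

lemma E_pos {lam : Fin n → ℝ} (hpos : ∀ i, 0 < lam i) {A : Finset (Fin n)} {k : ℕ}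
    (hk : k ≤ A.card) : 0 < E lam A k :=
  Finset.sum_pos (fun s _ => Finset.prod_pos fun i _ => hpos i)
    (Finset.powersetCard_nonempty.2 hk)

lemma E_erase (lam : Fin n → ℝ) {j : Fin n} {A : Finset (Fin n)} (hj : j ∈ A) (k : ℕ) :
    E lam A (k+1) = E lam (A.erase j) (k+1) + lam j * E lam (A.erase j) k := by
  conv_lhs => rw [← Finset.insert_erase hj]
  exact E_insert lam (Finset.notMem_erase j A) k


lemma R3 (lam : Fin n → ℝ) (A : Finset (Fin n)) :
    ∀ k : ℕ, ∑ j ∈ A, lam j * E lam (A.erase j) k = ((k : ℝ) + 1) * E lam A (k+1) := by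
  induction A using Finset.induction_on with
  | empty => intro k; simp [E_card_lt lam (by simp : (∅ : Finset (Fin n)).card < k + 1)]
  | @insert a B ha ih =>
    intro k
    rw [Finset.sum_insert ha, Finset.erase_insert ha]
    have hrw : ∀ j ∈ B, lam j * E lam ((insert a B).erase j) k
        = lam j * E lam (insert a (B.erase j)) k := by
      intro j hj
      rw [Finset.erase_insert_of_ne (fun h => ha (by rwa [h]))]
    rw [Finset.sum_congr rfl hrw]
    cases k with
    | zero =>
      simp only [E_zero, mul_one]
      have h1 := ih 0
      simp only [E_zero, mul_one, Nat.cast_zero, zero_add, one_mul] at h1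
      rw [E_insert lam ha 0, E_zero]
      push_cast
      linarith [h1]
    | succ s =>
      have hrw2 : ∀ j ∈ B, lam j * E lam (insert a (B.erase j)) (s+1)
          = lam j * E lam (B.erase j) (s+1) + lam a * (lam j * E lam (B.erase j) s) := by
        intro j hj
        rw [E_insert lam (fun h => ha (Finset.mem_of_mem_erase h)) s]
        ring
      rw [Finset.sum_congr rfl hrw2, Finset.sum_add_distrib, ← Finset.mul_sum, ih (s+1), ih s,
        E_insert lam ha (s+1)]
      push_cast
      ring

lemma newton {lam : Fin n → ℝ} (hpos : ∀ i, 0 < lam i) (A : Finset (Fin n)) :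
    ∀ m : ℕ, E lam A m * E lam A (m+2) ≤ E lam A (m+1) ^ 2 := by
  induction A using Finset.induction_on with
  | empty =>
    intro m
    have h2 : E lam (∅ : Finset (Fin n)) (m+2) = 0 := E_card_lt lam (by simp)
    rw [h2, mul_zero]
    positivity
  | @insert a B ha ih =>
    intro m
    have ht : 0 ≤ lam a := (hpos a).le
    have hlog : ∀ s : ℕ, E lam B s * E lam B (s+3) ≤ E lam B (s+1) * E lam B (s+2) := by
      intro s
      rcases le_or_gt (s+3) B.card with hc | hc
      · have h1 := ih s
        have h2 := ih (s+1)
        have p1 : 0 < E lam B (s+1) := E_pos hpos (by omega)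
        have p2 : 0 < E lam B (s+2) := E_pos hpos (by omega)
        nlinarith [mul_le_mul h1 h2 (mul_nonneg (E_nonneg hpos B (s+1)) (E_nonneg hpos B (s+3))) (sq_nonneg (E lam B (s+1))), E_nonneg hpos B s, E_nonneg hpos B (s+3)]
      · rw [E_card_lt lam hc, mul_zero]
        exact mul_nonneg (E_nonneg hpos B _) (E_nonneg hpos B _)
    cases m with
    | zero =>
      rw [E_zero, one_mul, E_insert lam ha 1, E_insert lam ha 0, E_zero, mul_one]
      nlinarith [ih 0, E_nonneg hpos B 1, sq_nonneg (lam a), E_zero lam B]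
    | succ s =>
      rw [show s+1+2 = (s+2)+1 by ring, show s+1+1 = (s+1)+1 by ring,
        E_insert lam ha (s+2), E_insert lam ha (s+1), E_insert lam ha s]
      have h1 := ih s
      have h2 := ih (s+1)
      have h3 := hlog s
      nlinarith [mul_le_mul_of_nonneg_left h3 ht, mul_le_mul_of_nonneg_left h1 (sq_nonneg (lam a)), sq_nonneg (lam a), E_nonneg hpos B s, E_nonneg hpos B (s+1), E_nonneg hpos B (s+2), E_nonneg hpos B (s+3)]


lemma pair {lam : Fin n → ℝ} (hpos : ∀ i, 0 < lam i) {a b : Fin n} {B : Finset (Fin n)}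
    (ha : a ∉ B) (hb : b ∉ B) (m : ℕ) :
    0 ≤ lam a * lam b * ((lam a - lam b) *
      (E lam (insert a B) (m+1) * E lam (insert b B) m
        - E lam (insert a B) m * E lam (insert b B) (m+1))) := by
  have h0 : 0 ≤ lam a * lam b := mul_nonneg (hpos a).le (hpos b).le
  cases m with
  | zero =>
    rw [E_zero, E_zero, E_insert lam ha 0, E_insert lam hb 0, E_zero]
    have : lam a * lam b * ((lam a - lam b) *
        ((E lam B 1 + lam a * 1) * 1 - 1 * (E lam B 1 + lam b * 1)))
        = lam a * lam b * (lam a - lam b)^2 := by ring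
    rw [this]
    positivity
  | succ s =>
    rw [E_insert lam ha (s+1), E_insert lam hb (s+1), E_insert lam ha s, E_insert lam hb s]
    have key : lam a * lam b * ((lam a - lam b) *
        ((E lam B (s+1+1) + lam a * E lam B (s+1)) * (E lam B (s+1) + lam b * E lam B s)
          - (E lam B (s+1) + lam a * E lam B s) * (E lam B (s+1+1) + lam b * E lam B (s+1))))
        = lam a * lam b * (lam a - lam b)^2
            * (E lam B (s+1)^2 - E lam B s * E lam B (s+2)) := by ring
    rw [key]
    have hnewt := newton hpos B s
    have : 0 ≤ lam a * lam b * (lam a - lam b)^2 := by positivity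
    nlinarith [this, hnewt]

lemma chebyshev {lam : Fin n → ℝ} (hpos : ∀ i, 0 < lam i) (m : ℕ) :
    (∑ j : Fin n, lam j * E lam (univ.erase j) m)
        * (∑ j : Fin n, lam j^2 * E lam (univ.erase j) (m+1))
      ≤ (∑ j : Fin n, lam j * E lam (univ.erase j) (m+1))
        * (∑ j : Fin n, lam j^2 * E lam (univ.erase j) m) := by
  rw [← sub_nonneg]
  set P : Fin n → ℝ := fun j => E lam (univ.erase j) m with hP
  set Q : Fin n → ℝ := fun j => E lam (univ.erase j) (m+1) with hQ
  have expand : (∑ j : Fin n, lam j * Q j) * (∑ j : Fin n, lam j^2 * P j)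
      - (∑ j : Fin n, lam j * P j) * (∑ j : Fin n, lam j^2 * Q j)
      = ∑ j : Fin n, ∑ l : Fin n,
          (lam j * Q j * (lam l^2 * P l) - lam j * P j * (lam l^2 * Q l)) := by
    rw [Finset.sum_mul_sum, Finset.sum_mul_sum, ← Finset.sum_sub_distrib]
    exact Finset.sum_congr rfl fun j _ => by rw [← Finset.sum_sub_distrib]
  rw [expand]
  set H : Fin n → Fin n → ℝ :=
    fun j l => lam j * Q j * (lam l^2 * P l) - lam j * P j * (lam l^2 * Q l) with hH
  have hsym : ∑ j : Fin n, ∑ l : Fin n, H j l = ∑ j : Fin n, ∑ l : Fin n, H l j :=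
    Finset.sum_comm
  have hterm : ∀ j l : Fin n, 0 ≤ H j l + H l j := by
    intro j l
    rcases eq_or_ne j l with rfl | hne
    · simp only [hH]; ring_nf; exact le_refl 0
    · have hjl : l ∈ univ.erase j := Finset.mem_erase.2 ⟨hne.symm, Finset.mem_univ l⟩
      have hlj : j ∈ univ.erase l := Finset.mem_erase.2 ⟨hne, Finset.mem_univ j⟩
      set B : Finset (Fin n) := (univ.erase j).erase l with hB
      have e1 : (univ : Finset (Fin n)).erase j = insert l B := by
        rw [hB, Finset.insert_erase hjl]
      have e2 : (univ : Finset (Fin n)).erase l = insert j B := by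
        rw [hB, Finset.erase_right_comm, Finset.insert_erase hlj]
      have hlB : l ∉ B := Finset.notMem_erase l _
      have hjB : j ∉ B := by
        rw [hB, Finset.erase_right_comm]; exact Finset.notMem_erase j _
      have key := pair hpos hlB hjB m
      simp only [hH, hP, hQ, e1, e2]
      nlinarith [key]
  have h2 : 0 ≤ ∑ j : Fin n, ∑ l : Fin n, (H j l + H l j) :=
    Finset.sum_nonneg fun j _ => Finset.sum_nonneg fun l _ => hterm j l
  have h3 : ∑ j : Fin n, ∑ l : Fin n, (H j l + H l j)
      = (∑ j : Fin n, ∑ l : Fin n, H j l) + ∑ j : Fin n, ∑ l : Fin n, H l j := by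
    simp [Finset.sum_add_distrib]
  rw [h3, ← hsym] at h2
  linarith


lemma tel (f : ℕ → ℝ) : ∀ K : ℕ, ∑ i ∈ Finset.Icc 2 (K+1), (f i - f (i-1)) = f (K+1) - f 1 := by
  intro K
  induction K with
  | zero => rw [Finset.Icc_eq_empty (by omega), Finset.sum_empty, sub_self]
  | succ s ih =>
    rw [Finset.sum_Icc_succ_top (by omega : 2 ≤ s+1+1), ih]
    have h : s+1+1-1 = s+1 := rfl
    rw [h]; ring

lemma sum_lam (lam : Fin n → ℝ) : ∑ j : Fin n, lam j = E lam univ 1 := by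
  have := R3 lam univ 0
  simpa [E_zero] using this

lemma sum_sq (lam : Fin n → ℝ) (m : ℕ) :
    ∑ j : Fin n, lam j^2 * E lam (univ.erase j) m
      = E lam univ 1 * E lam univ (m+1) - ((m:ℝ)+2) * E lam univ (m+2) := by
  have hterm : ∀ j : Fin n, lam j^2 * E lam (univ.erase j) m
      = lam j * E lam univ (m+1) - lam j * E lam (univ.erase j) (m+1) := by
    intro j
    have := E_erase lam (Finset.mem_univ j) m
    linear_combination (-lam j) * this
  calc ∑ j : Fin n, lam j^2 * E lam (univ.erase j) m
      = ∑ j : Fin n, (lam j * E lam univ (m+1) - lam j * E lam (univ.erase j) (m+1)) :=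
        Finset.sum_congr rfl fun j _ => hterm j
    _ = (∑ j : Fin n, lam j) * E lam univ (m+1)
        - ∑ j : Fin n, lam j * E lam (univ.erase j) (m+1) := by
        rw [Finset.sum_sub_distrib, Finset.sum_mul]
    _ = E lam univ 1 * E lam univ (m+1) - ((m:ℝ)+2) * E lam univ (m+2) := by
        rw [sum_lam, R3 lam univ (m+1)]
        push_cast
        ring_nf


end Aux17

open Aux17 in
theorem stmt_17 (n k : ℕ) (hn : 2 ≤ n) (hk : 2 ≤ k) (hkn : k ≤ n)
    (lam : Fin n → ℝ) (hpos : ∀ i, 0 < lam i) :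
    (((k : ℝ) + 1) * esymm (k + 1) lam / ((k : ℝ) * esymm k lam)
        - 2 * esymm 2 lam / esymm 1 lam
      = ∑ i ∈ Finset.Icc 2 k,
          (((i : ℝ) + 1) * esymm (i + 1) lam / ((i : ℝ) * esymm i lam)
            - (i : ℝ) * esymm i lam / (((i : ℝ) - 1) * esymm (i - 1) lam)))
    ∧ ∀ i ∈ Finset.Icc 2 k,
        -(esymm 1 lam / ((i : ℝ) * ((i : ℝ) - 1)))
          ≤ ((i : ℝ) + 1) * esymm (i + 1) lam / ((i : ℝ) * esymm i lam)
            - (i : ℝ) * esymm i lam / (((i : ℝ) - 1) * esymm (i - 1) lam) := by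
  have hE : ∀ m : ℕ, esymm m lam = E lam univ m := fun _ => rfl
  have hcard : (univ : Finset (Fin n)).card = n := by simp
  constructor
  · -- telescoping
    obtain ⟨K, rfl⟩ : ∃ K, k = K + 1 := ⟨k - 1, by omega⟩
    set g : ℕ → ℝ := fun j => ((j:ℝ)+1) * esymm (j+1) lam / ((j:ℝ) * esymm j lam) with hg
    have h1 : ∑ i ∈ Finset.Icc 2 (K+1),
        (((i : ℝ) + 1) * esymm (i + 1) lam / ((i : ℝ) * esymm i lam)
          - (i : ℝ) * esymm i lam / (((i : ℝ) - 1) * esymm (i - 1) lam))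
        = ∑ i ∈ Finset.Icc 2 (K+1), (g i - g (i-1)) := by
      refine Finset.sum_congr rfl fun i hi => ?_
      have h2i : 2 ≤ i := (Finset.mem_Icc.1 hi).1
      have hi1 : i - 1 + 1 = i := by omega
      have hci : ((i-1 : ℕ) : ℝ) = (i:ℝ) - 1 := by
        rw [Nat.cast_sub (by omega)]; norm_num
      simp only [hg, hi1, hci]
      ring_nf
    rw [h1, tel g K]
    simp only [hg]
    norm_num
  · -- the inequality
    intro i hi
    obtain ⟨h2i, hik⟩ := Finset.mem_Icc.1 hi
    obtain ⟨m, rfl⟩ : ∃ m, i = m + 2 := ⟨i - 2, by omega⟩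
    have hX : 0 < E lam univ (m+1) := E_pos hpos (by omega)
    have hY : 0 < E lam univ (m+2) := E_pos hpos (by omega)
    have hs : 0 < E lam univ 1 := E_pos hpos (by omega)
    have hZ : 0 ≤ E lam univ (m+3) := E_nonneg hpos univ (m+3)
    have hR0 := R3 lam univ m
    have hR1 := R3 lam univ (m+1)
    have hA0 := sum_sq lam m
    have hA1 := sum_sq lam (m+1)
    have star := chebyshev hpos (n := n) m
    rw [hR0, hR1, hA0, hA1] at star
    rw [show m+1+1 = m+2 from rfl] at star
    push_cast at star ⊢
    have e31 : ((m:ℝ)+2)+1 = (m:ℝ)+3 := by ring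
    have e21 : ((m:ℝ)+2)-1 = (m:ℝ)+1 := by ring
    simp only [hE, e31, e21]
    have hb : (0:ℝ) < ((m:ℝ)+1) * E lam univ (m+1) := mul_pos (by positivity) hX
    have ha : (0:ℝ) < ((m:ℝ)+2) * E lam univ (m+2) := mul_pos (by positivity) hY
    have hd0 : (0:ℝ) ≤ ((m:ℝ)+2) * ((m:ℝ)+1) := by positivity
    have key : ((m:ℝ)+2) * E lam univ (m+2) / (((m:ℝ)+1) * E lam univ (m+1))
        - ((m:ℝ)+3) * E lam univ (m+3) / (((m:ℝ)+2) * E lam univ (m+2))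
        ≤ E lam univ 1 / (((m:ℝ)+2) * ((m:ℝ)+1)) := by
      rw [div_sub_div _ _ hb.ne' ha.ne', div_le_div_iff₀ (mul_pos hb ha) (by positivity)]
      linarith [mul_le_mul_of_nonneg_left star hd0]
    linarith [key]
end
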